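/- Let X be a Banach space, f : X → [-∞,∞] a function, and dom(f) := {x ∈ X : |f(x)| < ∞}. Let B be the set of all x ∈ dom(f) \ int(dom(f)) for which there exists 0 ≠ v ∈ X such that the one-sided Hadamard directional derivative f'_{H+}(x,v) exists and is finite. Then B is a directionally porous set. -/
import Mathlib


open Filter Topology Set Metric

section Defs
variable {X Y : Type*} [NormedAddCommGroup X] [NormedSpace ℝ X]
  [NormedAddCommGroup Y] [NormedSpace ℝ Y]

/-- One-sided directional derivative: `f'₊(x,v) = L`. -/
def HasPosDirDeriv (f : X → Y) (x v : X) (L : Y) : Prop :=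
  Tendsto (fun t : ℝ => t⁻¹ • (f (x + t • v) - f x)) (𝓝[>] (0:ℝ)) (𝓝 L)

/-- Two-sided directional derivative: `f'(x,v) = L`. -/
def HasDirDeriv (f : X → Y) (x v : X) (L : Y) : Prop :=
  Tendsto (fun t : ℝ => t⁻¹ • (f (x + t • v) - f x)) (𝓝[≠] (0:ℝ)) (𝓝 L)

/-- One-sided Hadamard directional derivative: `f'_{H+}(x,v) = L`. -/
def HasHadamardPosDirDeriv (f : X → Y) (x v : X) (L : Y) : Prop :=
  Tendsto (fun p : X × ℝ => p.2⁻¹ • (f (x + p.2 • p.1) - f x))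
    ((𝓝 v) ×ˢ (𝓝[>] (0:ℝ))) (𝓝 L)

/-- Two-sided Hadamard directional derivative: `f'_H(x,v) = L`. -/
def HasHadamardDirDeriv (f : X → Y) (x v : X) (L : Y) : Prop :=
  Tendsto (fun p : X × ℝ => p.2⁻¹ • (f (x + p.2 • p.1) - f x))
    ((𝓝 v) ×ˢ (𝓝[≠] (0:ℝ))) (𝓝 L)

/-- `f` is Lipschitz at the point `x`: `limsup_{y→x} ‖f y - f x‖/‖y-x‖ < ∞`. -/
def LipschitzAtPt (f : X → Y) (x : X) : Prop :=
  ∃ K δ : ℝ, 0 < δ ∧ ∀ y, ‖y - x‖ < δ → ‖f y - f x‖ ≤ K * ‖y - x‖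

/-- `A` is porous at `x` in the direction `v`. -/
def PorousAt (A : Set X) (x v : X) : Prop :=
  ∃ p > (0:ℝ), ∃ t : ℕ → ℝ, (∀ n, 0 < t n) ∧ Tendsto t atTop (𝓝 0) ∧
    ∀ n, ball (x + t n • v) (p * t n) ∩ A = ∅

/-- `A` is directionally porous. -/
def DirectionallyPorous (A : Set X) : Prop :=
  ∀ x ∈ A, ∃ v : X, v ≠ 0 ∧ PorousAt A x v

/-- `A` is σ-directionally porous. -/
def SigmaDirectionallyPorous (A : Set X) : Prop :=
  ∃ s : ℕ → Set X, (∀ n, DirectionallyPorous (s n)) ∧ A = ⋃ n, s n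

/-- The open cone `C(x,v,δ)`. -/
def Cone (x v : X) (δ : ℝ) : Set X :=
  {y : X | y ≠ x ∧ ‖v - ‖y - x‖⁻¹ • (y - x)‖ < δ}

/-- `f` is Hadamard differentiable at `x` with derivative `L`: the difference quotients
converge to `L v` uniformly in `v` from each compact set. -/
def HadamardDifferentiableAt (f : X → Y) (x : X) (L : X →L[ℝ] Y) : Prop :=
  ∀ C : Set X, IsCompact C →
    TendstoUniformlyOn (fun (t : ℝ) (v : X) => t⁻¹ • (f (x + t • v) - f x))
      (fun v => L v) (𝓝[≠] (0:ℝ)) C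

end Defs

/-- One-sided Hadamard directional derivative (finite value `L`) for an extended-real-valued
function. -/
def HasHadamardPosDirDerivEReal {X : Type*} [NormedAddCommGroup X] [NormedSpace ℝ X]
    (f : X → EReal) (x v : X) (L : ℝ) : Prop :=
  Tendsto (fun p : X × ℝ => ((p.2⁻¹ : ℝ) : EReal) * (f (x + p.2 • p.1) - f x))
    ((𝓝 v) ×ˢ (𝓝[>] (0:ℝ))) (𝓝 (L : EReal))

theorem stmt18 {X : Type*} [NormedAddCommGroup X] [NormedSpace ℝ X] [CompleteSpace X]
    (f : X → EReal) :
    DirectionallyPorous {x : X |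
      x ∈ {y : X | f y ≠ ⊤ ∧ f y ≠ ⊥} \ interior {y : X | f y ≠ ⊤ ∧ f y ≠ ⊥} ∧
      ∃ v : X, v ≠ 0 ∧ ∃ L : ℝ, HasHadamardPosDirDerivEReal f x v L} := by
  intro x hx
  obtain ⟨⟨hxdom, hxnotint⟩, v, hv, L, hL⟩ := hx
  -- f x is a real number
  obtain ⟨r, hr⟩ : ∃ r : ℝ, f x = (r : EReal) := by
    lift f x to ℝ using ⟨hxdom.1, hxdom.2⟩ with r
    exact ⟨r, rfl⟩
  -- Eventually the point x + t • u is in the domain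
  have hev : ∀ᶠ q : X × ℝ in (𝓝 v) ×ˢ (𝓝[>] (0:ℝ)),
      f (x + q.2 • q.1) ≠ ⊤ ∧ f (x + q.2 • q.1) ≠ ⊥ := by
    have h1 : ∀ᶠ q : X × ℝ in (𝓝 v) ×ˢ (𝓝[>] (0:ℝ)),
        ((q.2⁻¹ : ℝ) : EReal) * (f (x + q.2 • q.1) - f x) ∈ Set.Ioo ⊥ ⊤ :=
      hL.eventually (Ioo_mem_nhds (EReal.bot_lt_coe L) (EReal.coe_lt_top L))
    have h2 : ∀ᶠ q : X × ℝ in (𝓝 v) ×ˢ (𝓝[>] (0:ℝ)), q.2 ∈ Set.Ioi (0:ℝ) :=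
      Filter.Eventually.prod_inr (eventually_mem_nhdsWithin) _
    filter_upwards [h1, h2] with q hq ht
    have htpos : (0:ℝ) < q.2⁻¹ := inv_pos.mpr ht
    constructor
    · intro htop
      rw [htop, hr, EReal.top_sub_coe, EReal.mul_top_of_pos (by exact_mod_cast htpos)] at hq
      exact (lt_irrefl _ hq.2)
    · intro hbot
      rw [hbot, hr, EReal.bot_sub, EReal.mul_bot_of_pos (by exact_mod_cast htpos)] at hq
      exact (lt_irrefl _ hq.1)
  obtain ⟨s, hs, w, hw, hsub⟩ := Filter.mem_prod_iff.mp hev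
  obtain ⟨p, hp, hball⟩ := Metric.mem_nhds_iff.mp hs
  obtain ⟨ε, hε, hIoo⟩ := mem_nhdsGT_iff_exists_Ioo_subset.mp hw
  have hε0 : (0:ℝ) < ε := hε
  refine ⟨v, hv, p, hp, fun n => ε / 2 / (n + 1), fun n => by positivity, ?_, ?_⟩
  · have : Tendsto (fun n : ℕ => ε / 2 * (1 / (n + 1))) atTop (𝓝 (ε / 2 * 0)) :=
      tendsto_const_nhds.mul tendsto_one_div_add_atTop_nhds_zero_nat
    simpa [div_eq_mul_inv] using this
  · intro n
    set t : ℝ := ε / 2 / (n + 1) with htdef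
    have ht0 : 0 < t := by positivity
    have htε : t < ε := by
      rw [htdef]
      calc ε / 2 / (n + 1) ≤ ε / 2 / 1 := by
            apply div_le_div_of_nonneg_left (by positivity) one_pos
            exact_mod_cast Nat.le_add_left 1 n
        _ < ε := by linarith
    -- the ball is inside the domain
    have hdom : Metric.ball (x + t • v) (p * t) ⊆ {y : X | f y ≠ ⊤ ∧ f y ≠ ⊥} := by
      intro z hz
      set u : X := t⁻¹ • (z - x) with hudef
      have hzu : x + t • u = z := by
        rw [hudef, smul_smul, mul_inv_cancel₀ ht0.ne', one_smul]
        abel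
      have hu : u ∈ Metric.ball v p := by
        rw [Metric.mem_ball, dist_eq_norm]
        have h1 : t⁻¹ • (t • v) = v := by
          rw [smul_smul, inv_mul_cancel₀ ht0.ne', one_smul]
        have : u - v = t⁻¹ • (z - (x + t • v)) := by
          calc u - v = t⁻¹ • (z - x) - t⁻¹ • (t • v) := by rw [hudef, h1]
            _ = t⁻¹ • (z - (x + t • v)) := by rw [← smul_sub]; congr 1; abel
        rw [this, norm_smul, norm_inv, Real.norm_of_nonneg ht0.le]
        rw [Metric.mem_ball, dist_eq_norm] at hz
        calc t⁻¹ * ‖z - (x + t • v)‖ < t⁻¹ * (p * t) := by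
              apply mul_lt_mul_of_pos_left hz (inv_pos.mpr ht0)
          _ = p := by field_simp
      have := hsub (Set.mk_mem_prod (hball hu) (hIoo ⟨ht0, htε⟩) :
        ((u, t) : X × ℝ) ∈ s ×ˢ w)
      simpa [hzu] using this
    rw [Set.eq_empty_iff_forall_notMem]
    rintro y ⟨hy1, ⟨_, hy3⟩, _⟩
    exact hy3 (interior_maximal hdom Metric.isOpen_ball hy1)
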